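/- Let f be convex differentiable, g proper closed convex, F = f + g. Fix x ∈ ℝⁿ and τ > 0, and let x⁺ satisfy 0 ∈ ∇f(x) − τ(x − x⁺) + ∂g(x⁺). Then g(x⁺) + f(x) + ⟨∇f(x), x⁺ − x⟩ + (τ/2)‖x⁺ − x‖² ≤ min_{z∈ℝⁿ} { F(z) + (τ/2)‖z − x‖² }. (Proximal gradient envelope upper bound.) -/

import Mathlib

open scoped RealInnerProductSpace

/-- The ε-subdifferential of `g` at `xb` (`ε = 0`: Fenchel subdifferential). -/
def epsSubdiff {n : ℕ} (g : EuclideanSpace ℝ (Fin n) → EReal) (ε : ℝ)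
    (xb : EuclideanSpace ℝ (Fin n)) : Set (EuclideanSpace ℝ (Fin n)) :=
  {v | ∀ x, ((⟪v, x - xb⟫ : ℝ) : EReal) + g xb ≤ g x + (ε : EReal)}

/-- Gradient inequality for a convex differentiable function. -/
lemma grad_ineq {n : ℕ} (f : EuclideanSpace ℝ (Fin n) → ℝ)
    (hf : ConvexOn ℝ Set.univ f)
    (x z g : EuclideanSpace ℝ (Fin n)) (hg : HasGradientAt f g x) :
    f x + ⟪g, z - x⟫ ≤ f z := by
  set φ : ℝ → ℝ := fun t => f (x + t • (z - x)) with hφ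
  have hconv : ConvexOn ℝ Set.univ φ := by
    have := hf.comp_affineMap (AffineMap.lineMap x z : ℝ →ᵃ[ℝ] EuclideanSpace ℝ (Fin n))
    have h2 := this.subset (Set.subset_univ _) convex_univ
    convert h2 using 1
    rotate_left 4
    ext t
    simp only [φ, Function.comp_apply, AffineMap.lineMap_apply, vsub_eq_sub, vadd_eq_add]
    rw [add_comm]
    all_goals rfl
  have hder : HasDerivAt φ ⟪g, z - x⟫ 0 := by
    have hc : HasDerivAt (fun t : ℝ => x + t • (z - x)) (z - x) 0 := by
      simpa using ((hasDerivAt_id (0:ℝ)).smul_const (z - x)).const_add x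
    have hF : HasFDerivAt f (InnerProductSpace.toDual ℝ _ g) (x + (0:ℝ) • (z - x)) := by
      simpa using hg.hasFDerivAt
    have := hF.comp_hasDerivAt (0:ℝ) hc
    simp only [InnerProductSpace.toDual_apply_apply] at this
    exact this
  have hslope := hconv.le_slope_of_hasDerivAt (Set.mem_univ 0) (Set.mem_univ 1)
    one_pos hder
  have h0 : φ 0 = f x := by simp [φ]
  have h1 : φ 1 = f z := by simp [φ]
  simp only [slope_def_field, h0, h1] at hslope
  have : ⟪g, z - x⟫ ≤ f z - f x := by
    simpa [div_one] using hslope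
  linarith

/-- **Proximal gradient envelope upper bound.** If
`0 ∈ ∇f(x) − τ(x − x⁺) + ∂g(x⁺)` then
`g(x⁺) + f(x) + ⟪∇f(x), x⁺ − x⟫ + (τ/2)‖x⁺ − x‖²
  ≤ min_z { F(z) + (τ/2)‖z − x‖² }`, with `F = f + g`. -/
theorem stmt12 {n : ℕ} (f : EuclideanSpace ℝ (Fin n) → ℝ)
    (hf : ConvexOn ℝ Set.univ f)
    (f' : EuclideanSpace ℝ (Fin n) → EuclideanSpace ℝ (Fin n))
    (hf' : ∀ x, HasGradientAt f (f' x) x)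
    (g : EuclideanSpace ℝ (Fin n) → EReal)
    (hlsc : LowerSemicontinuous g)
    (hconv : Convex ℝ {p : EuclideanSpace ℝ (Fin n) × ℝ | g p.1 ≤ (p.2 : EReal)})
    (hproper_top : ∃ x, g x ≠ ⊤) (hproper_bot : ∀ x, g x ≠ ⊥)
    (τ : ℝ) (hτ : 0 < τ)
    (x xp : EuclideanSpace ℝ (Fin n))
    (hincl : ∃ v ∈ epsSubdiff g 0 xp, f' x - τ • (x - xp) + v = 0) :
    ∀ z, g xp + ((f x + ⟪f' x, xp - x⟫ + τ / 2 * ‖xp - x‖ ^ 2 : ℝ) : EReal)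
      ≤ ((f z : EReal) + g z) + ((τ / 2 * ‖z - x‖ ^ 2 : ℝ) : EReal) := by
  intro z
  obtain ⟨v, hv, heq⟩ := hincl
  have hveq : v = τ • (x - xp) - f' x := by
    have h1 : v = -(f' x - τ • (x - xp)) := by
      rw [eq_neg_iff_add_eq_zero, add_comm]; exact heq
    rw [h1]; abel
  by_cases hz : g z = ⊤
  · rw [hz, EReal.add_top_of_ne_bot (EReal.coe_ne_bot (f z)),
      EReal.top_add_of_ne_bot (EReal.coe_ne_bot _)]
    exact le_top
  · have hsub := hv z
    rw [hveq] at hsub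
    have hzero : ((0:ℝ) : EReal) = 0 := rfl
    rw [hzero, add_zero] at hsub
    have hxt : g xp ≠ ⊤ := by
      intro ht
      rw [ht, EReal.add_top_of_ne_bot (EReal.coe_ne_bot _)] at hsub
      exact hz (top_le_iff.mp hsub)
    obtain ⟨gz, hgz⟩ : ∃ r : ℝ, g z = (r : EReal) :=
      ⟨(g z).toReal, (EReal.coe_toReal hz (hproper_bot z)).symm⟩
    obtain ⟨gxp, hgxp⟩ : ∃ r : ℝ, g xp = (r : EReal) :=
      ⟨(g xp).toReal, (EReal.coe_toReal hxt (hproper_bot xp)).symm⟩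
    rw [hgz, hgxp] at hsub
    have hsubR : ⟪τ • (x - xp) - f' x, z - xp⟫ + gxp ≤ gz := by
      rw [← EReal.coe_add] at hsub
      exact_mod_cast hsub
    have hgrad : f x + ⟪f' x, z - x⟫ ≤ f z := grad_ineq f hf x z (f' x) (hf' x)
    have hkey : ⟪f' x, xp - x⟫ + τ / 2 * ‖xp - x‖ ^ 2
        ≤ ⟪τ • (x - xp) - f' x, z - xp⟫ + ⟪f' x, z - x⟫ + τ / 2 * ‖z - x‖ ^ 2 := by
      have h1 : (0:ℝ) ≤ τ / 2 * ⟪z - xp, z - xp⟫ :=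
        mul_nonneg (by linarith) real_inner_self_nonneg
      have e1 : ‖xp - x‖ ^ 2 = ⟪xp - x, xp - x⟫ := (real_inner_self_eq_norm_sq _).symm
      have e2 : ‖z - x‖ ^ 2 = ⟪z - x, z - x⟫ := (real_inner_self_eq_norm_sq _).symm
      rw [e1, e2]
      have c1 : ⟪z, xp⟫ = ⟪xp, z⟫ := real_inner_comm _ _
      have c2 : ⟪z, x⟫ = ⟪x, z⟫ := real_inner_comm _ _
      have c3 : ⟪xp, x⟫ = ⟪x, xp⟫ := real_inner_comm _ _
      simp only [inner_sub_left, inner_sub_right, real_inner_smul_left, c1, c2, c3] at h1 ⊢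
      nlinarith [h1]
    have hfinal : gxp + (f x + ⟪f' x, xp - x⟫ + τ / 2 * ‖xp - x‖ ^ 2)
        ≤ f z + gz + τ / 2 * ‖z - x‖ ^ 2 := by linarith
    rw [hgxp, hgz]
    calc ((gxp : ℝ) : EReal) + ((f x + ⟪f' x, xp - x⟫ + τ / 2 * ‖xp - x‖ ^ 2 : ℝ) : EReal)
        = ((gxp + (f x + ⟪f' x, xp - x⟫ + τ / 2 * ‖xp - x‖ ^ 2) : ℝ) : EReal) := by
          rw [← EReal.coe_add]
      _ ≤ ((f z + gz + τ / 2 * ‖z - x‖ ^ 2 : ℝ) : EReal) := EReal.coe_le_coe_iff.mpr hfinal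
      _ = ((f z : EReal) + (gz : EReal)) + ((τ / 2 * ‖z - x‖ ^ 2 : ℝ) : EReal) := by
          rw [← EReal.coe_add, ← EReal.coe_add]
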